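/- arXiv:2112.07526 — 3 statements merged into one kernel-verified Lean document; each statement's English description precedes it below -/
import Mathlib

section
/- For every integer k ≥ 0 and indeterminate x, the generating function A_{k,x}(y) := Σ_{m=-1}^∞ a_{m,k}(x) y^{m+1}, where a_{m,k}(x) = Σ_{k₁=k}^{m+1} ((-1)^{k₁-k}/k₁!) [k₁ choose k] C(x, m+1-k₁), equals (1/k!)·(1+y)^x·log^k(1+y) as a formal power series in y. -/
open Finset

/-- Generalized binomial coefficient `C(x, n) = x(x-1)⋯(x-n+1)/n!` as a function of `x : ℚ`. -/
noncomputable def myChoose (x : ℚ) (n : ℕ) : ℚ :=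
  (∏ i ∈ Finset.range n, (x - (i : ℚ))) / (n.factorial : ℚ)

/-- Unsigned Stirling numbers of the first kind, `(x)_n = Σ_k stirling1 n k · x^k`. -/
def stirling1 : ℕ → ℕ → ℕ
  | 0, 0 => 1
  | 0, _ + 1 => 0
  | n + 1, 0 => n * stirling1 n 0
  | n + 1, k + 1 => n * stirling1 n (k + 1) + stirling1 n k

/-- Stirling numbers of the second kind. -/
def stirling2 : ℕ → ℕ → ℕ
  | 0, 0 => 1
  | 0, _ + 1 => 0
  | _ + 1, 0 => 0
  | n + 1, k + 1 => (k + 1) * stirling2 n (k + 1) + stirling2 n k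

/-- The formal power series `log(1+y) = Σ_{n ≥ 1} (-1)^{n-1} y^n / n`. -/
noncomputable def log1p : PowerSeries ℚ :=
  PowerSeries.mk fun n => if n = 0 then 0 else (-1 : ℚ) ^ (n + 1) / (n : ℚ)

/-- The formal binomial series `(1+y)^x = Σ_n C(x,n) y^n`. -/
noncomputable def binomSeries (x : ℚ) : PowerSeries ℚ :=
  PowerSeries.mk fun n => myChoose x n

/-- `A_{k,x}(y) = (1/k!) (1+y)^x log^k(1+y)`. -/
noncomputable def Aser (k : ℕ) (x : ℚ) : PowerSeries ℚ :=
  ((k.factorial : ℚ)⁻¹) • (binomSeries x * log1p ^ k)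

/-- Formal derivative in `y`. -/
noncomputable def Dy (f : PowerSeries ℚ) : PowerSeries ℚ :=
  PowerSeries.mk fun n => ((n + 1 : ℕ) : ℚ) * PowerSeries.coeff (R := ℚ) (n + 1) f

/-!
Since `(1 + y) · d/dy log(1+y) = 1`, the coefficients `c(n, k)` of `log^k(1+y)` satisfy
`(n+1) c(n+1, k+1) + n c(n, k+1) = (k+1) c(n, k)`, which is the Stirling recurrence for
`(-1)^(n+k) k! [n, k] / n!`. Hence `(1/k!) log^k(1+y) = Σ_n (-1)^(n-k) [n, k] yⁿ / n!`, and
the theorem is the Cauchy product of this series with `(1+y)^x`.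
-/

open PowerSeries

lemma stirling1_eq_zero_of_lt {n k : ℕ} (h : n < k) : stirling1 n k = 0 := by
  induction n generalizing k with
  | zero =>
    obtain ⟨k, rfl⟩ := Nat.exists_eq_succ_of_ne_zero (Nat.pos_iff_ne_zero.mp h)
    rfl
  | succ n ih =>
    obtain ⟨k, rfl⟩ := Nat.exists_eq_succ_of_ne_zero (by omega : k ≠ 0)
    simp only [stirling1, ih (by omega : n < k + 1), ih (by omega : n < k), mul_zero, add_zero]

lemma stirling1_succ_zero (n : ℕ) : stirling1 (n + 1) 0 = 0 := by
  induction n with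
  | zero => rfl
  | succ n ih => rw [stirling1, ih, mul_zero]

lemma constantCoeff_log1p : constantCoeff log1p = 0 := by
  simp [log1p]

lemma one_add_X_mul_derivative_log1p : (1 + X) * d⁄dX ℚ log1p = 1 := by
  ext n
  rw [add_mul, one_mul, map_add]
  cases n with
  | zero => simp [coeff_derivative, log1p]
  | succ n =>
    simp only [coeff_succ_X_mul, coeff_derivative, log1p, coeff_mk, coeff_one,
      Nat.succ_ne_zero, if_false, Nat.cast_add, Nat.cast_one]
    field_simp
    ring

lemma one_add_X_mul_derivative_log1p_pow (k : ℕ) :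
    (1 + X) * d⁄dX ℚ (log1p ^ (k + 1)) = C ((k : ℚ) + 1) * log1p ^ k := by
  rw [Derivation.leibniz_pow, Nat.add_sub_cancel, smul_eq_mul, nsmul_eq_mul,
    mul_left_comm, ← mul_assoc (1 + X), mul_comm (1 + X), mul_assoc,
    one_add_X_mul_derivative_log1p, mul_one, map_add, map_one, map_natCast, Nat.cast_succ]

lemma coeff_X_mul_derivative {R : Type*} [CommSemiring R] (f : R⟦X⟧) (n : ℕ) :
    coeff n (X * d⁄dX R f) = n * coeff n f := by
  cases n with
  | zero => simp
  | succ n => rw [coeff_succ_X_mul, coeff_derivative, mul_comm, Nat.cast_succ]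

lemma coeff_log1p_pow_succ_recurrence (k n : ℕ) :
    ((n : ℚ) + 1) * coeff (n + 1) (log1p ^ (k + 1)) + n * coeff n (log1p ^ (k + 1)) =
      ((k : ℚ) + 1) * coeff n (log1p ^ k) := by
  have h := congrArg (coeff n) (one_add_X_mul_derivative_log1p_pow k)
  rw [add_mul, one_mul, map_add, coeff_X_mul_derivative, coeff_derivative, coeff_C_mul] at h
  linarith

lemma coeff_log1p_pow (k n : ℕ) :
    coeff n (log1p ^ k) = (-1 : ℚ) ^ (n + k) * k.factorial * stirling1 n k / n.factorial := by
  induction k generalizing n with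
  | zero =>
    cases n with
    | zero => simp [stirling1]
    | succ n => simp [coeff_one, stirling1_succ_zero]
  | succ k ih =>
    induction n with
    | zero =>
      simp [coeff_zero_eq_constantCoeff, constantCoeff_log1p, stirling1_eq_zero_of_lt]
    | succ n ihn =>
      have hrec := coeff_log1p_pow_succ_recurrence k n
      rw [ihn, ih n] at hrec
      refine mul_left_cancel₀ (by positivity : (n : ℚ) + 1 ≠ 0) ?_
      rw [stirling1, Nat.factorial_succ n, Nat.factorial_succ k] at *
      push_cast at hrec ⊢
      field_simp at hrec ⊢
      linear_combination hrec

/-- the generating function `A_{k,x}(y) = Σ_{m≥-1} a_{m,k}(x) y^{m+1}`,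
with `a_{m,k}(x) = Σ_{k₁=k}^{m+1} ((-1)^{k₁-k}/k₁!) [k₁,k] C(x, m+1-k₁)`, equals
`(1/k!) (1+y)^x log^k(1+y)`.  Here the coefficient of `y^N` (with `N = m+1`) is `a_{N-1,k}(x)`. -/
theorem stmt1 (k : ℕ) (x : ℚ) :
    (PowerSeries.mk fun N => ∑ k₁ ∈ Finset.Icc k N,
        ((-1 : ℚ) ^ (k₁ - k) / (k₁.factorial : ℚ)) * (stirling1 k₁ k : ℚ) *
          myChoose x (N - k₁)) =
      ((k.factorial : ℚ)⁻¹) • (binomSeries x * log1p ^ k) := by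
  ext N
  rw [coeff_mk, map_smul, mul_comm, coeff_mul, Nat.sum_antidiagonal_eq_sum_range_succ_mk,
    smul_eq_mul, mul_sum]
  have hsub : Icc k N ⊆ range (N + 1) := fun i hi =>
    mem_range.2 (Nat.lt_succ_of_le (mem_Icc.1 hi).2)
  rw [← sum_subset hsub fun k₁ hN hk₁ => ?_]
  · refine sum_congr rfl fun k₁ hk₁ => ?_
    have hsign : (-1 : ℚ) ^ (k₁ + k) = (-1) ^ (k₁ - k) := by
      rw [show k₁ + k = k₁ - k + 2 * k by simp only [mem_Icc] at hk₁; omega, pow_add, pow_mul,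
        neg_one_sq, one_pow, mul_one]
    rw [coeff_log1p_pow, binomSeries, coeff_mk, hsign]
    field_simp
  · have hlt : k₁ < k := by simp only [mem_range, mem_Icc, not_and_or] at hN hk₁; omega
    rw [coeff_log1p_pow, stirling1_eq_zero_of_lt hlt]
    simp
end

section
/- For every integer k ≥ 0 and indeterminate x, the formal power series identity holds: A_{2k,x}(y) - A_{2k,x-1}(y) = 2·Σ_{h≥k+1} C(2h, 2k)·A_{2h,x}(y)/y, where A_{k,x}(y) = (1/k!)(1+y)^x log^k(1+y). Equivalently, both sides equal (y/(2k)!)·(1+y)^{x-1}·log^{2k}(1+y). -/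
open Finset

/-!
Since `(1+y)^x = (1+y) (1+y)^{x-1}`, the difference `A_{2k,x} - A_{2k,x-1}` is
`y (1+y)^{x-1} log^{2k}(1+y) / (2k)!`. On the other side `C(2h,2k) / (2h)! = 1 / ((2k)! (2h-2k)!)`,
so the sum is `(1+y)^x log^{2k}(1+y) / (2k)!` times `cosh(log(1+y)) - 1`, and
`cosh(log(1+y)) - 1 = ((1+y) + (1+y)⁻¹) / 2 - 1 = y² / (2 (1+y))` because
`exp(log(1+y)) = 1 + y` (the quotient `exp(log(1+y)) / (1+y)` has derivative zero).
-/

open PowerSeries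

namespace PowerSeries

section CommRing

variable {R : Type*} [CommRing R]

theorem coeff_mul_subst {g : R⟦X⟧} (hg : constantCoeff g = 0) (P f : R⟦X⟧) (n : ℕ) :
    coeff n (P * f.subst g) = ∑ d ∈ range (n + 1), coeff d f * coeff n (P * g ^ d) := by
  have hs := HasSubst.of_constantCoeff_zero' hg
  set T : R⟦X⟧ := ∑ d ∈ range (n + 1), coeff d f • X ^ d
  obtain ⟨q, hq⟩ : X ^ (n + 1) ∣ f - T := by
    refine X_pow_dvd_iff.mpr fun m hm => ?_
    simp [T, coeff_X_pow, hm]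
  have hsubst : f.subst g = ∑ d ∈ range (n + 1), coeff d f • g ^ d + g ^ (n + 1) * q.subst g := by
    conv_lhs => rw [eq_add_of_sub_eq' hq, ← coe_substAlgHom hs]
    simp only [T, map_add, map_sum, map_smul, map_mul, map_pow, substAlgHom_X]
    rw [coe_substAlgHom]
  have hvanish : coeff n (P * (g ^ (n + 1) * q.subst g)) = 0 := by
    refine X_pow_dvd_iff.mp ?_ n (Nat.lt_succ_self n)
    exact ((pow_dvd_pow_of_dvd (X_dvd_iff.mpr hg) _).mul_right _).mul_left _
  rw [hsubst, mul_add, map_add, hvanish, add_zero, mul_sum, map_sum]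
  simp

theorem constantCoeff_subst_of_constantCoeff_eq_zero {g : R⟦X⟧} (hg : constantCoeff g = 0)
    (f : R⟦X⟧) : constantCoeff (f.subst g) = constantCoeff f := by
  simpa using coeff_mul_subst hg 1 f 0

end CommRing

section Field

variable {K : Type*} [Field K]

variable (K) in
/-- `cosh √X - 1`: substituting `log(1+X)^2` for `X` turns it into `cosh(log(1+X)) - 1`. -/
noncomputable def coshSqrtSubOne : K⟦X⟧ :=
  mk fun m => if m = 0 then 0 else ((2 * m).factorial : K)⁻¹

theorem coeff_X_pow_mul_coshSqrtSubOne (k h : ℕ) :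
    coeff h (X ^ k * coshSqrtSubOne K) = if k < h then ((2 * (h - k)).factorial : K)⁻¹ else 0 := by
  rw [coeff_X_pow_mul', coshSqrtSubOne, coeff_mk]
  split_ifs <;> first | rfl | omega

variable [Algebra ℚ K]

theorem one_add_X_mul_derivative_log : (1 + X) * d⁄dX K (log K) = 1 := by
  ext n
  rw [deriv_log, add_mul, one_mul, map_add]
  cases n with
  | zero => simp
  | succ n => simp [coeff_succ_X_mul, pow_succ]

theorem exp_subst_log : (exp K).subst (log K) = 1 + X := by
  have : CharZero K := Algebra.charZero_of_charZero ℚ K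
  have h1 : constantCoeff (1 + X : K⟦X⟧) ≠ 0 := by simp
  have hlog : d⁄dX K (log K) = (1 + X)⁻¹ := by
    rw [eq_inv_iff_mul_eq_one h1, mul_comm, one_add_X_mul_derivative_log]
  suffices h : (exp K).subst (log K) * (1 + X)⁻¹ = 1 by
    calc (exp K).subst (log K) = (exp K).subst (log K) * (1 + X)⁻¹ * (1 + X) := by
          rw [mul_assoc, PowerSeries.inv_mul_cancel _ h1, mul_one]
      _ = 1 + X := by rw [h, one_mul]
  apply derivative.ext
  · rw [Derivation.leibniz, derivative_subst HasSubst.log, derivative_exp, derivative_inv', hlog]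
    simp only [map_add, Derivation.map_one_eq_zero, derivative_X, zero_add, mul_one, smul_eq_mul]
    ring
  · simp [constantCoeff_subst_of_constantCoeff_eq_zero]

theorem one_add_X_mul_evalNegHom_exp_subst_log :
    (1 + X) * (evalNegHom (exp K)).subst (log K) = 1 := by
  rw [← exp_subst_log, ← subst_mul HasSubst.log, exp_mul_exp_neg_eq_one,
    ← coe_substAlgHom HasSubst.log, map_one]

theorem two_mul_coshSqrtSubOne_subst_X_sq :
    2 * (coshSqrtSubOne K).subst (X ^ 2 : K⟦X⟧) = exp K + evalNegHom (exp K) - 2 := by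
  ext n
  rw [← map_ofNat (C (R := K)) 2, map_sub, map_add, coeff_C_mul, coeff_C,
    coeff_subst_X_pow two_ne_zero]
  obtain ⟨m, rfl | rfl⟩ := Nat.even_or_odd' n
  · rcases eq_or_ne m 0 with rfl | hm
    · norm_num [coshSqrtSubOne, evalNegHom, coeff_rescale]
    · simp [coshSqrtSubOne, coeff_rescale, hm, evalNegHom, ← two_mul]
  · simp [coeff_rescale, evalNegHom, pow_succ]

theorem one_add_X_mul_two_mul_coshSqrtSubOne_subst_log_sq :
    (1 + X) * (2 * (coshSqrtSubOne K).subst (log K ^ 2)) = X ^ 2 := by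
  have hsq : HasSubst (X ^ 2 : K⟦X⟧) := HasSubst.X_pow two_ne_zero
  have hcomp : (X ^ 2 : K⟦X⟧).subst (log K) = log K ^ 2 := by
    rw [← coe_substAlgHom HasSubst.log, map_pow, substAlgHom_X]
  rw [← hcomp, ← subst_comp_subst_apply hsq HasSubst.log, ← coe_substAlgHom HasSubst.log,
    ← map_ofNat (substAlgHom (R := K) HasSubst.log) 2, ← map_mul,
    two_mul_coshSqrtSubOne_subst_X_sq, map_sub, map_add, map_ofNat, coe_substAlgHom,
    exp_subst_log]
  linear_combination one_add_X_mul_evalNegHom_exp_subst_log (K := K)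

end Field

end PowerSeries

theorem log1p_eq_log : log1p = log ℚ := by
  ext n
  simp [log1p]

theorem myChoose_succ (x : ℚ) (n : ℕ) :
    myChoose x (n + 1) = myChoose (x - 1) (n + 1) + myChoose (x - 1) n := by
  have hshift : ∏ i ∈ range n, (x - ((i + 1 : ℕ) : ℚ)) = ∏ i ∈ range n, (x - 1 - (i : ℚ)) :=
    prod_congr rfl fun i _ => by push_cast; ring
  simp only [myChoose, prod_range_succ' (fun i => x - (i : ℚ)), prod_range_succ, hshift,
    Nat.factorial_succ]
  have : (n.factorial : ℚ) ≠ 0 := by positivity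
  field_simp
  push_cast
  ring

theorem binomSeries_eq_one_add_X_mul (x : ℚ) :
    binomSeries x = (1 + X) * binomSeries (x - 1) := by
  ext n
  rw [add_mul, one_mul, map_add]
  cases n with
  | zero => simp [binomSeries, myChoose]
  | succ n => simpa [binomSeries, coeff_succ_X_mul] using myChoose_succ x n

theorem Aser_sub_Aser_sub_one (j : ℕ) (x : ℚ) :
    Aser j x - Aser j (x - 1) = (j.factorial : ℚ)⁻¹ • (X * (binomSeries (x - 1) * log1p ^ j)) := by
  rw [Aser, Aser, ← smul_sub, binomSeries_eq_one_add_X_mul x]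
  congr 1
  ring

theorem sum_choose_mul_coeff_Aser (k m : ℕ) (x : ℚ) :
    ∑ h ∈ Icc (k + 1) m, ((2 * h).choose (2 * k) : ℚ) * coeff m (Aser (2 * h) x) =
      ((2 * k).factorial : ℚ)⁻¹ *
        coeff m (binomSeries x * (X ^ k * coshSqrtSubOne ℚ).subst (log ℚ ^ 2)) := by
  have hfilter : (range (m + 1)).filter (k < ·) = Icc (k + 1) m := by
    ext h
    simp only [mem_filter, mem_range, mem_Icc]
    omega
  rw [coeff_mul_subst (by simp), mul_sum]
  simp only [coeff_X_pow_mul_coshSqrtSubOne, ite_mul, zero_mul, mul_ite, mul_zero]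
  rw [← sum_filter, hfilter]
  refine sum_congr rfl fun h hh => ?_
  obtain ⟨hkh, -⟩ := mem_Icc.mp hh
  have hfac : ((2 * h).choose (2 * k) : ℚ) * (2 * k).factorial * (2 * (h - k)).factorial =
      (2 * h).factorial := by
    rw [show 2 * (h - k) = 2 * h - 2 * k by omega]
    exact_mod_cast Nat.choose_mul_factorial_mul_factorial (by omega)
  rw [Aser, coeff_smul, smul_eq_mul, log1p_eq_log, ← pow_mul]
  field_simp
  linear_combination coeff m (binomSeries x * log ℚ ^ (2 * h)) * hfac

theorem two_mul_binomSeries_mul_coshSqrtSubOne_subst (k : ℕ) (x : ℚ) :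
    C 2 * (binomSeries x * (X ^ k * coshSqrtSubOne ℚ).subst (log ℚ ^ 2)) =
      X * (X * (binomSeries (x - 1) * log1p ^ (2 * k))) := by
  have hL : HasSubst (log ℚ ^ 2) := HasSubst.of_constantCoeff_zero' (by simp)
  have hcosh := one_add_X_mul_two_mul_coshSqrtSubOne_subst_log_sq (K := ℚ)
  rw [map_ofNat, subst_mul hL, subst_pow hL, subst_X hL, binomSeries_eq_one_add_X_mul x,
    log1p_eq_log, pow_mul]
  linear_combination (binomSeries (x - 1) * (log ℚ ^ 2) ^ k) * hcosh

/-- `A_{2k,x} - A_{2k,x-1} = 2 Σ_{h≥k+1} C(2h,2k) A_{2h,x}/y`, and both sides equal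
`(y/(2k)!) (1+y)^{x-1} log^{2k}(1+y)`.  The infinite sum is encoded coefficientwise. -/
theorem stmt3 (k : ℕ) (x : ℚ) :
    (Aser (2 * k) x - Aser (2 * k) (x - 1) =
        (2 : ℚ) • (PowerSeries.mk fun n =>
          ∑ h ∈ Finset.Icc (k + 1) (n + 1),
            (((2 * h).choose (2 * k) : ℚ)) * PowerSeries.coeff (R := ℚ) (n + 1) (Aser (2 * h) x))) ∧
      Aser (2 * k) x - Aser (2 * k) (x - 1) =
        (((2 * k).factorial : ℚ)⁻¹) •
          (PowerSeries.X * (binomSeries (x - 1) * log1p ^ (2 * k))) := by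
  have hdiff := Aser_sub_Aser_sub_one (2 * k) x
  refine ⟨?_, hdiff⟩
  ext n
  rw [hdiff, coeff_smul, coeff_smul, coeff_mk, sum_choose_mul_coeff_Aser, smul_eq_mul,
    smul_eq_mul, ← coeff_succ_X_mul n, ← two_mul_binomSeries_mul_coshSqrtSubOne_subst k x,
    coeff_C_mul]
  ring
end

section
/- For all integers m, n ≥ -1 and indeterminates x, the polynomial identity holds: (C(1/2+x, m+1) + C(-1/2+x, m+1))·(C(1/2+x-m, n+1) + C(-1/2+x-m, n+1)) - (C(1/2+x, n+1) + C(-1/2+x, n+1))·(C(1/2+x-n, m+1) + C(-1/2+x-n, m+1)) = -2·((m-n)·(m+n+1)!/((m+1)!·(n+1)!))·(C(1/2+x, m+n+1) + C(-1/2+x, m+n+1)). -/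
open Finset

/-!
With `S(u, k) = C(u, k) + C(u - 1, k)` (`chooseSum`) and `u = 1/2 + x`, the bracketed sums are
`S(u, k)` and `S(u - m, k)`. The two falling factorials in `S(u, k + 1)` share the factor
`C(u - 1, k)`, so that `(k + 1) S(u, k + 1) = C(u - 1, k) (2u - k - 1)`. Hence, after
clearing factorials, both products on the left collapse through
`C(u - 1, a) C(u - 1 - a, b) = C(a + b, a) C(u - 1, a + b)` to `C(u - 1, a + b)` times a quadratic
in `u`; the difference of the two quadratics is `-2 (a - b) (2u - a - b - 1)`, and this is again the
factor of `S(u, a + b + 1)`. When `m = -1` the identity reduces to Pascal's rule.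
-/

namespace Ring

variable {R : Type*} [CommRing R] [BinomialRing R]

theorem choose_succ_right_eq (r : R) (k : ℕ) :
    choose r (k + 1) * (k + 1) = choose r k * (r - k) := by
  have h := choose_smul_choose r (Nat.le_add_right k 1)
  rw [Nat.choose_succ_self_right, Nat.add_sub_cancel_left, choose_one_right, nsmul_eq_mul] at h
  push_cast at h
  rw [mul_comm, h]

theorem choose_mul_choose_sub (r : R) (a b : ℕ) :
    choose r a * choose (r - a) b = (a + b).choose a * choose r (a + b) := by
  have h := choose_add_smul_choose (r - a) b a
  rw [sub_add_cancel, add_comm b, nsmul_eq_mul] at h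
  exact h.symm

end Ring

section chooseSum

open Ring
open scoped Nat

variable {R : Type*} [CommRing R] [BinomialRing R]

def chooseSum (r : R) (k : ℕ) : R := choose r k + choose (r - 1) k

theorem chooseSum_zero (r : R) : chooseSum r 0 = 2 := by
  rw [chooseSum, choose_zero_right, choose_zero_right, one_add_one_eq_two]

theorem chooseSum_succ_mul (r : R) (k : ℕ) :
    chooseSum r (k + 1) * (k + 1) = choose (r - 1) k * (2 * r - k - 1) := by
  have pascal := choose_succ_succ (r - 1) k
  rw [sub_add_cancel] at pascal
  rw [chooseSum, pascal]
  linear_combination 2 * choose_succ_right_eq (r - 1) k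

theorem chooseSum_add_one_sub (r : R) (k : ℕ) :
    chooseSum (r + 1) (k + 1) - chooseSum r (k + 1) = chooseSum r k := by
  have pascal₁ := choose_succ_succ r k
  have pascal₂ := choose_succ_succ (r - 1) k
  rw [sub_add_cancel] at pascal₂
  rw [chooseSum, chooseSum, chooseSum, add_sub_cancel_right]
  linear_combination pascal₁ + pascal₂

theorem factorial_mul_chooseSum_cross_sub_succ (u : R) (a b : ℕ) :
    ((a + 1)! * (b + 1)! : R) *
        (chooseSum u (a + 1) * chooseSum (u - a) (b + 1) -
          chooseSum u (b + 1) * chooseSum (u - b) (a + 1)) =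
      -2 * (a - b) * (a + b + 1)! * chooseSum u (a + b + 1) := by
  have hA := chooseSum_succ_mul u a
  have hB := chooseSum_succ_mul (u - a) b
  have hA' := chooseSum_succ_mul u b
  have hB' := chooseSum_succ_mul (u - b) a
  have hC := chooseSum_succ_mul u (a + b)
  have hV := choose_mul_choose_sub (u - 1) a b
  have hV' := choose_mul_choose_sub (u - 1) b a
  rw [sub_right_comm] at hV hV'
  rw [add_comm b, ← Nat.choose_symm_add] at hV'
  have hF := Nat.add_choose_mul_factorial_mul_factorial b a
  rw [add_comm b] at hF
  calc ((a + 1)! * (b + 1)! : R) *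
        (chooseSum u (a + 1) * chooseSum (u - a) (b + 1) -
          chooseSum u (b + 1) * chooseSum (u - b) (a + 1))
      = a ! * b ! * (chooseSum u (a + 1) * (a + 1) * (chooseSum (u - a) (b + 1) * (b + 1)) -
          chooseSum u (b + 1) * (b + 1) * (chooseSum (u - b) (a + 1) * (a + 1))) := by
        rw [Nat.factorial_succ, Nat.factorial_succ]; push_cast; ring
    _ = a ! * b ! *
          (choose (u - 1) a * choose (u - a - 1) b * (2 * u - a - 1) * (2 * (u - a) - b - 1) -
            choose (u - 1) b * choose (u - b - 1) a * (2 * u - b - 1) * (2 * (u - b) - a - 1)) := by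
        rw [hA, hB, hA', hB']; ring
    _ = a ! * b ! * (a + b).choose a * choose (u - 1) (a + b) *
          ((2 * u - a - 1) * (2 * (u - a) - b - 1) - (2 * u - b - 1) * (2 * (u - b) - a - 1)) := by
        rw [hV, hV']; ring
    _ = -2 * (a - b) * (a + b)! * (choose (u - 1) (a + b) * (2 * u - (a + b : ℕ) - 1)) := by
        rw [← hF]; push_cast; ring
    _ = -2 * (a - b) * (a + b + 1)! * chooseSum u (a + b + 1) := by
        rw [← hC, Nat.factorial_succ]; push_cast; ring

theorem factorial_mul_chooseSum_cross_sub (u : R) (p q : ℕ) :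
    (p ! * q ! : R) *
        (chooseSum u p * chooseSum (u - (p - 1)) q - chooseSum u q * chooseSum (u - (q - 1)) p) =
      -2 * (p - q) * (p + q - 1)! * chooseSum u (p + q - 1) := by
  wlog hpq : p ≤ q generalizing p q
  · have h := this q p (le_of_not_ge hpq)
    rw [add_comm q p] at h
    linear_combination -h
  rcases p with _ | a
  · rcases q with _ | b
    · simp [chooseSum_zero]
    · have h := chooseSum_add_one_sub u b
      simp only [chooseSum_zero, Nat.factorial_zero, zero_add, add_tsub_cancel_right, Nat.factorial_succ]
      push_cast
      rw [zero_sub, sub_neg_eq_add]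
      linear_combination 2 * (b + 1) * (b ! : R) * h
  · obtain ⟨b, rfl⟩ : ∃ b, q = b + 1 := ⟨q - 1, by omega⟩
    have h := factorial_mul_chooseSum_cross_sub_succ u a b
    rw [show a + 1 + (b + 1) - 1 = a + b + 1 by omega]
    push_cast
    simp only [add_sub_cancel_right]
    linear_combination h

end chooseSum

theorem myChoose_eq_choose (y : ℚ) (k : ℕ) : myChoose y k = Ring.choose y k := by
  rw [Ring.choose_eq_smul, ← Polynomial.aeval_eq_smeval, myChoose, smul_eq_mul,
    Polynomial.aeval_def, Polynomial.eval₂_eq_eval_map, descPochhammer_map,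
    descPochhammer_eval_eq_prod_range]
  ring

/-- for `m, n ≥ -1`,
`(C(1/2+x,m+1)+C(-1/2+x,m+1))(C(1/2+x-m,n+1)+C(-1/2+x-m,n+1))
 - (C(1/2+x,n+1)+C(-1/2+x,n+1))(C(1/2+x-n,m+1)+C(-1/2+x-n,m+1))
 = -2 (m-n)(m+n+1)!/((m+1)!(n+1)!) (C(1/2+x,m+n+1)+C(-1/2+x,m+n+1))`. -/
theorem stmt4 (m n : ℤ) (hm : -1 ≤ m) (hn : -1 ≤ n) (x : ℚ) :
    (myChoose (1 / 2 + x) (m + 1).toNat + myChoose (-(1 / 2) + x) (m + 1).toNat) *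
        (myChoose (1 / 2 + x - (m : ℚ)) (n + 1).toNat +
          myChoose (-(1 / 2) + x - (m : ℚ)) (n + 1).toNat) -
      (myChoose (1 / 2 + x) (n + 1).toNat + myChoose (-(1 / 2) + x) (n + 1).toNat) *
        (myChoose (1 / 2 + x - (n : ℚ)) (m + 1).toNat +
          myChoose (-(1 / 2) + x - (n : ℚ)) (m + 1).toNat) =
    -2 * (((m : ℚ) - (n : ℚ)) * ((m + n + 1).toNat.factorial : ℚ) /
        (((m + 1).toNat.factorial : ℚ) * ((n + 1).toNat.factorial : ℚ))) *
      (myChoose (1 / 2 + x) (m + n + 1).toNat + myChoose (-(1 / 2) + x) (m + n + 1).toNat) := by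
  obtain ⟨p, rfl⟩ : ∃ p : ℕ, m = p - 1 := ⟨(m + 1).toNat, by omega⟩
  obtain ⟨q, rfl⟩ : ∃ q : ℕ, n = q - 1 := ⟨(n + 1).toNat, by omega⟩
  have key := factorial_mul_chooseSum_cross_sub (1 / 2 + x) p q
  rw [show ((p : ℤ) - 1 + 1).toNat = p by omega, show ((q : ℤ) - 1 + 1).toNat = q by omega,
    show ((p : ℤ) - 1 + (q - 1) + 1).toNat = p + q - 1 by omega]
  simp only [chooseSum, ← myChoose_eq_choose, sub_right_comm _ _ (1 : ℚ)] at key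
  push_cast
  rw [show -(1 / 2) + x = 1 / 2 + x - 1 by ring]
  generalize 1 / 2 + x = u at key ⊢
  field_simp
  linear_combination key
end
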